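/- arXiv:2007.00173 — 3 statements merged into one kernel-verified Lean document; each statement's English description precedes it below -/
import Mathlib

section
/- For every integer N ≥ 1, every r ≥ 1, all integers k₁,…,k_r ≥ 1 and all N-th roots of unity ε₁,…,ε_r ∈ ℂ with (k_r, ε_r) ≠ (1,1), the sequence of partial sums S_M = ∑_{0 < n₁ < ⋯ < n_r ≤ M} ε₁^{n₁}⋯ε_r^{n_r} / (n₁^{k₁}⋯n_r^{k_r}) converges in ℂ as M → ∞. -/
open Filter Topology

/-- Partial sum `∑_{0 < n₁ < ⋯ < n_r ≤ M} ε₁^{n₁}⋯ε_r^{n_r} / (n₁^{k₁}⋯n_r^{k_r})`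
of the series defining a cyclotomic multiple zeta value. -/
noncomputable def cmzvPartial (r : ℕ) (k : Fin r → ℕ) (ε : Fin r → ℂ) (M : ℕ) : ℂ :=
  ∑ n ∈ (Fintype.piFinset fun _ : Fin r => Finset.Icc 1 M).filter
      (fun n => ∀ i j : Fin r, i < j → n i < n j),
    ∏ i, ε i ^ n i / (n i : ℂ) ^ k i

/-
Peel off the last index. With `η = ε_r`, `K = k_r` and `A m` the partial sum of depth `r - 1`,
`S_M = ∑_{m < M} η^{m+1} A m / (m+1)^K`. Bounding each factor `ε_i^{n_i} / n_i^{k_i}` by `1 / n_i`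
gives `|A m| ≤ H_m^{r-1} ≤ (1 + log m)^{r-1}`, and `A (m+1) - A m` collects the terms with
`n_{r-1} = m + 1`, so it is `O((1 + log m)^{r-1} / m)`. For `K ≥ 2` the series converges absolutely.
For `K = 1` we have `η ≠ 1`, so the geometric sums `∑ η^i` are bounded, while `A m / (m+1)` tends
to zero with summable variation; Dirichlet's test in its bounded-variation form applies.
-/

open Finset Real

section Dirichlet

variable {𝕜 E : Type*} [NormedField 𝕜] [NormedAddCommGroup E] [NormedSpace 𝕜 E]

theorem cauchySeq_series_smul_of_tendsto_zero_of_summable_norm_sub {f : ℕ → 𝕜} {z : ℕ → E}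
    {b : ℝ} (hf0 : Tendsto f atTop (𝓝 0)) (hfv : Summable fun n => ‖f (n + 1) - f n‖)
    (hzb : ∀ n, ‖∑ i ∈ range n, z i‖ ≤ b) :
    CauchySeq fun n => ∑ i ∈ range n, f i • z i := by
  rw [← cauchySeq_shift 1]
  simp_rw [sum_range_by_parts _ _ (Nat.succ _), Nat.succ_sub_one, sub_eq_add_neg]
  refine (NormedField.tendsto_zero_smul_of_tendsto_zero_of_bounded hf0
    ⟨b, eventually_map.mpr <| Eventually.of_forall fun n => hzb (n + 1)⟩).cauchySeq.add
    (CauchySeq.neg ?_)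
  refine cauchySeq_range_of_norm_bounded (hfv.mul_left b).hasSum.tendsto_sum_nat.cauchySeq
    fun n => ?_
  rw [norm_smul, ← sub_eq_add_neg, mul_comm]
  exact mul_le_mul_of_nonneg_right (hzb _) (norm_nonneg _)

theorem norm_geom_sum_le {η : 𝕜} (hη : ‖η‖ ≤ 1) (hη1 : η ≠ 1) (n : ℕ) :
    ‖∑ i ∈ range n, η ^ i‖ ≤ 2 / ‖η - 1‖ := by
  rw [geom_sum_eq hη1, norm_div]
  gcongr
  calc ‖η ^ n - 1‖ ≤ ‖η ^ n‖ + ‖(1 : 𝕜)‖ := norm_sub_le _ _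
    _ ≤ 1 + 1 := by
      rw [norm_pow, norm_one]
      gcongr
      exact pow_le_one₀ (norm_nonneg _) hη
    _ = 2 := one_add_one_eq_two

end Dirichlet

theorem isLittleO_one_add_log_pow_rpow (s : ℕ) {p : ℝ} (hp : 0 < p) :
    (fun x : ℝ => (1 + log x) ^ s) =o[atTop] fun x => x ^ p := by
  have hlog : (fun x : ℝ => 1 + log x) =O[atTop] log := by
    refine Asymptotics.IsBigO.of_bound 2 ?_
    filter_upwards [tendsto_log_atTop.eventually_ge_atTop 1] with x hx
    rw [norm_of_nonneg (by linarith), norm_of_nonneg (by linarith)]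
    linarith
  refine (hlog.pow s).trans_isLittleO ?_
  simpa only [rpow_natCast] using isLittleO_log_rpow_rpow_atTop (s : ℝ) hp

theorem tendsto_one_add_log_pow_div_succ (s : ℕ) :
    Tendsto (fun m : ℕ => (1 + log m) ^ s / ((m : ℝ) + 1)) atTop (𝓝 0) := by
  have h := ((isLittleO_one_add_log_pow_rpow s one_pos).comp_tendsto
    tendsto_natCast_atTop_atTop).tendsto_div_nhds_zero
  refine squeeze_zero' (Eventually.of_forall fun m => by positivity) ?_ h
  filter_upwards [eventually_ge_atTop 1] with m hm
  have hm' : (1 : ℝ) ≤ m := by exact_mod_cast hm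
  simp only [Function.comp_apply, rpow_one]
  gcongr
  linarith

theorem summable_one_add_log_pow_div_succ_sq (s : ℕ) :
    Summable fun m : ℕ => (1 + log m) ^ s / ((m : ℝ) + 1) ^ 2 := by
  have h := ((isLittleO_one_add_log_pow_rpow s (p := 1 / 2) (by norm_num)).comp_tendsto
    tendsto_natCast_atTop_atTop).bound one_pos
  refine Summable.of_norm_bounded_eventually_nat
    (Real.summable_nat_rpow.2 (by norm_num : (1 / 2 : ℝ) - (2 : ℕ) < -1)) ?_
  filter_upwards [h, eventually_ge_atTop 1] with m hlog hm
  have hm' : (0 : ℝ) < m := by exact_mod_cast hm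
  have hlog' : (1 + log m) ^ s ≤ (m : ℝ) ^ (1 / 2 : ℝ) := by
    simpa [abs_of_nonneg (add_nonneg zero_le_one (log_natCast_nonneg m)),
      abs_of_nonneg (rpow_nonneg hm'.le _)] using hlog
  rw [norm_of_nonneg (by positivity), rpow_sub_natCast hm'.ne']
  gcongr
  linarith

theorem norm_pow_div_natCast_pow_le {z : ℂ} (hz : ‖z‖ ≤ 1) {n j k : ℕ} (hn : 1 ≤ n)
    (hjk : j ≤ k) : ‖z ^ n / (n : ℂ) ^ k‖ ≤ 1 / (n : ℝ) ^ j := by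
  rw [norm_div, norm_pow, norm_pow, Complex.norm_natCast]
  have hn' : (1 : ℝ) ≤ n := by exact_mod_cast hn
  gcongr
  exact pow_le_one₀ (norm_nonneg _) hz

def cmzvIndex (r M : ℕ) : Finset (Fin r → ℕ) :=
  (Fintype.piFinset fun _ : Fin r => Icc 1 M).filter fun n => ∀ i j : Fin r, i < j → n i < n j

theorem mem_cmzvIndex {r M : ℕ} {n : Fin r → ℕ} :
    n ∈ cmzvIndex r M ↔ (∀ i, n i ∈ Icc 1 M) ∧ StrictMono n := by
  simp only [cmzvIndex, mem_filter, Fintype.mem_piFinset, StrictMono]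

theorem cmzvPartial_eq_sum_cmzvIndex (r : ℕ) (k : Fin r → ℕ) (ε : Fin r → ℂ) (M : ℕ) :
    cmzvPartial r k ε M = ∑ n ∈ cmzvIndex r M, ∏ i, ε i ^ n i / (n i : ℂ) ^ k i :=
  rfl

theorem Fin.strictMono_snoc {α : Type*} [Preorder α] {s : ℕ} {t : Fin s → α} (ht : StrictMono t)
    {x : α} (hx : ∀ i, t i < x) : StrictMono (Fin.snoc t x : Fin (s + 1) → α) := by
  intro i j hij
  obtain ⟨i, rfl⟩ := Fin.eq_castSucc_of_ne_last (Fin.ne_last_of_lt hij)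
  obtain ⟨j, rfl⟩ | rfl := j.eq_castSucc_or_eq_last
  · simpa using ht (Fin.castSucc_lt_castSucc_iff.1 hij)
  · simpa using hx i

theorem init_mem_cmzvIndex {s M m : ℕ} {n : Fin (s + 1) → ℕ} (hn : n ∈ cmzvIndex (s + 1) M)
    (hlast : n (Fin.last s) = m + 1) : Fin.init n ∈ cmzvIndex s m := by
  rw [mem_cmzvIndex] at hn ⊢
  refine ⟨fun i => ?_, hn.2.comp Fin.strictMono_castSucc⟩
  have hbd := mem_Icc.1 (hn.1 i.castSucc)
  have hlt := hn.2 (Fin.castSucc_lt_last i)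
  exact mem_Icc.2 ⟨hbd.1, by simp only [Fin.init]; omega⟩

theorem snoc_mem_cmzvIndex {s M m : ℕ} {t : Fin s → ℕ} (ht : t ∈ cmzvIndex s m) (hm : m < M) :
    (Fin.snoc t (m + 1) : Fin (s + 1) → ℕ) ∈ cmzvIndex (s + 1) M := by
  rw [mem_cmzvIndex] at ht ⊢
  have hbd : ∀ i, 1 ≤ t i ∧ t i ≤ m := fun i => mem_Icc.1 (ht.1 i)
  refine ⟨fun i => mem_Icc.2 ?_, Fin.strictMono_snoc ht.2 fun i => by have := hbd i; omega⟩
  obtain ⟨i, rfl⟩ | rfl := i.eq_castSucc_or_eq_last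
  · have := hbd i
    simp only [Fin.snoc_castSucc]
    omega
  · simp only [Fin.snoc_last]
    omega

theorem cmzvPartial_succ (s : ℕ) (k : Fin (s + 1) → ℕ) (ε : Fin (s + 1) → ℂ) (M : ℕ) :
    cmzvPartial (s + 1) k ε M = ∑ m ∈ range M,
      ε (Fin.last s) ^ (m + 1) / ((m + 1 : ℕ) : ℂ) ^ k (Fin.last s) *
        cmzvPartial s (Fin.init k) (Fin.init ε) m := by
  have hlast : ∀ n ∈ cmzvIndex (s + 1) M, 1 ≤ n (Fin.last s) ∧ n (Fin.last s) ≤ M :=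
    fun n hn => mem_Icc.1 ((mem_cmzvIndex.1 hn).1 _)
  rw [cmzvPartial_eq_sum_cmzvIndex, ← sum_fiberwise_of_maps_to (g := fun n => n (Fin.last s) - 1)
    (t := range M) fun n hn => by have := hlast n hn; rw [mem_range]; omega]
  refine sum_congr rfl fun m hm => ?_
  have hfiber : ∀ n ∈ (cmzvIndex (s + 1) M).filter fun n => n (Fin.last s) - 1 = m,
      n ∈ cmzvIndex (s + 1) M ∧ n (Fin.last s) = m + 1 := by
    intro n hn
    rw [mem_filter] at hn
    have := hlast n hn.1
    exact ⟨hn.1, by omega⟩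
  rw [cmzvPartial_eq_sum_cmzvIndex, mul_sum]
  refine sum_nbij' Fin.init (fun t => Fin.snoc t (m + 1)) (fun n hn => ?_) (fun t ht => ?_)
    (fun n hn => ?_) (fun t _ => Fin.init_snoc _ _) (fun n hn => ?_)
  · exact init_mem_cmzvIndex (hfiber n hn).1 (hfiber n hn).2
  · exact mem_filter.2 ⟨snoc_mem_cmzvIndex ht (mem_range.1 hm), by simp⟩
  · rw [← (hfiber n hn).2, Fin.snoc_init_self]
  · rw [Fin.prod_univ_castSucc, (hfiber n hn).2, mul_comm]
    rfl

section Bounds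

variable {r : ℕ} {k : Fin r → ℕ} {ε : Fin r → ℂ}

theorem norm_cmzvPartial_le (hk : ∀ i, 1 ≤ k i) (hε : ∀ i, ‖ε i‖ ≤ 1) (M : ℕ) :
    ‖cmzvPartial r k ε M‖ ≤ (1 + log M) ^ r := by
  have hterm : ∀ n ∈ cmzvIndex r M,
      ‖∏ i, ε i ^ n i / (n i : ℂ) ^ k i‖ ≤ ∏ i, (n i : ℝ)⁻¹ := by
    intro n hn
    rw [norm_prod]
    refine prod_le_prod (fun _ _ => norm_nonneg _) fun i _ => ?_
    simpa using norm_pow_div_natCast_pow_le (j := 1) (hε i)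
      (mem_Icc.1 ((mem_cmzvIndex.1 hn).1 i)).1 (hk i)
  calc ‖cmzvPartial r k ε M‖ ≤ ∑ n ∈ cmzvIndex r M, ∏ i, (n i : ℝ)⁻¹ :=
        norm_sum_le_of_le _ hterm
    _ ≤ ∑ n ∈ Fintype.piFinset fun _ : Fin r => Icc 1 M, ∏ i, (n i : ℝ)⁻¹ :=
        sum_le_sum_of_subset_of_nonneg (filter_subset _ _) fun _ _ _ => by positivity
    _ = (∑ m ∈ Icc 1 M, (m : ℝ)⁻¹) ^ r := by rw [← Fin.prod_const, prod_univ_sum]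
    _ ≤ (1 + log M) ^ r := by
        gcongr
        simpa [harmonic_eq_sum_Icc] using harmonic_le_one_add_log M

theorem norm_cmzvPartial_succ_sub_le (hk : ∀ i, 1 ≤ k i) (hε : ∀ i, ‖ε i‖ ≤ 1) (M : ℕ) :
    ‖cmzvPartial r k ε (M + 1) - cmzvPartial r k ε M‖ ≤ (1 + log M) ^ r / ((M : ℝ) + 1) := by
  cases r with
  | zero =>
    simpa [cmzvPartial_eq_sum_cmzvIndex, cmzvIndex] using (by positivity : (0 : ℝ) ≤ M + 1)
  | succ s =>
    rw [cmzvPartial_succ, cmzvPartial_succ, sum_range_succ, add_sub_cancel_left, norm_mul]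
    have hl : 1 ≤ 1 + log M := le_add_of_nonneg_right (log_natCast_nonneg M)
    calc _ ≤ 1 / ((M + 1 : ℕ) : ℝ) ^ 1 * (1 + log M) ^ s :=
          mul_le_mul (norm_pow_div_natCast_pow_le (hε _) (by omega) (hk _))
            (norm_cmzvPartial_le (fun _ => hk _) (fun _ => hε _) M) (norm_nonneg _)
            (by positivity)
      _ ≤ 1 / ((M + 1 : ℕ) : ℝ) ^ 1 * (1 + log M) ^ (s + 1) :=
          mul_le_mul_of_nonneg_left (pow_le_pow_right₀ hl s.le_succ) (by positivity)
      _ = (1 + log M) ^ (s + 1) / ((M : ℝ) + 1) := by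
          push_cast
          ring

end Bounds

section LastIndex

variable {A : ℕ → ℂ} {w : ℕ → ℝ}

theorem cauchySeq_sum_div_succ_mul_pow {η : ℂ} (hη : ‖η‖ ≤ 1) (hη1 : η ≠ 1)
    (hA : ∀ m, ‖A m‖ ≤ w m) (hdA : ∀ m, ‖A (m + 1) - A m‖ ≤ w m / ((m : ℝ) + 1))
    (hw : Summable fun m : ℕ => w m / ((m : ℝ) + 1) ^ 2)
    (hw0 : Tendsto (fun m : ℕ => w m / ((m : ℝ) + 1)) atTop (𝓝 0)) :
    CauchySeq fun M => ∑ m ∈ range M, A m / ((m + 1 : ℕ) : ℂ) * η ^ m := by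
  set f : ℕ → ℂ := fun m => A m / ((m + 1 : ℕ) : ℂ) with hf
  have hf0 : Tendsto f atTop (𝓝 0) := by
    refine squeeze_zero_norm (fun m => ?_) hw0
    rw [hf, norm_div, Complex.norm_natCast]
    push_cast
    exact div_le_div_of_nonneg_right (hA m) (by positivity)
  have hfv : Summable fun m => ‖f (m + 1) - f m‖ := by
    refine (hw.mul_left 2).of_nonneg_of_le (fun _ => norm_nonneg _) fun m => ?_
    have hsplit : f (m + 1) - f m = (A (m + 1) - A m) / ((m + 1 + 1 : ℕ) : ℂ)
        - A m / (((m + 1 : ℕ) : ℂ) * ((m + 1 + 1 : ℕ) : ℂ)) := by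
      have h1 : (m : ℂ) + 1 ≠ 0 := by exact_mod_cast m.succ_ne_zero
      have h2 : (m : ℂ) + 1 + 1 ≠ 0 := by exact_mod_cast (m + 1).succ_ne_zero
      simp only [hf]
      push_cast
      field_simp
      ring
    have hw_nonneg : 0 ≤ w m := (norm_nonneg _).trans (hA m)
    calc ‖f (m + 1) - f m‖
        ≤ ‖A (m + 1) - A m‖ / ((m : ℝ) + 2) + ‖A m‖ / (((m : ℝ) + 1) * ((m : ℝ) + 2)) := by
          rw [hsplit]
          refine (norm_sub_le _ _).trans_eq ?_
          simp only [norm_div, norm_mul, Complex.norm_natCast]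
          push_cast
          ring
      _ ≤ w m / ((m : ℝ) + 1) / ((m : ℝ) + 1) + w m / (((m : ℝ) + 1) * ((m : ℝ) + 1)) := by
          gcongr
          · exact hdA m
          · linarith
          · exact hA m
          · linarith
      _ = 2 * (w m / ((m : ℝ) + 1) ^ 2) := by
          field_simp
          ring
  exact cauchySeq_series_smul_of_tendsto_zero_of_summable_norm_sub hf0 hfv
    (norm_geom_sum_le hη hη1)

theorem summable_pow_div_pow_mul {η : ℂ} (hη : ‖η‖ ≤ 1) {K : ℕ} (hK : 2 ≤ K)
    (hA : ∀ m, ‖A m‖ ≤ w m) (hw : Summable fun m : ℕ => w m / ((m : ℝ) + 1) ^ 2) :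
    Summable fun m => η ^ (m + 1) / ((m + 1 : ℕ) : ℂ) ^ K * A m := by
  refine Summable.of_norm_bounded hw fun m => ?_
  rw [norm_mul]
  calc _ ≤ 1 / ((m + 1 : ℕ) : ℝ) ^ 2 * w m :=
        mul_le_mul (norm_pow_div_natCast_pow_le hη (by omega) hK) (hA m) (norm_nonneg _)
          (by positivity)
    _ = w m / ((m : ℝ) + 1) ^ 2 := by
        push_cast
        ring

theorem exists_tendsto_sum_pow_div_pow_mul {η : ℂ} (hη : ‖η‖ ≤ 1) {K : ℕ} (hK : 1 ≤ K)
    (hηK : ¬(K = 1 ∧ η = 1)) (hA : ∀ m, ‖A m‖ ≤ w m)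
    (hdA : ∀ m, ‖A (m + 1) - A m‖ ≤ w m / ((m : ℝ) + 1))
    (hw : Summable fun m : ℕ => w m / ((m : ℝ) + 1) ^ 2)
    (hw0 : Tendsto (fun m : ℕ => w m / ((m : ℝ) + 1)) atTop (𝓝 0)) :
    ∃ L, Tendsto (fun M => ∑ m ∈ range M, η ^ (m + 1) / ((m + 1 : ℕ) : ℂ) ^ K * A m)
      atTop (𝓝 L) := by
  rcases hK.eq_or_lt with rfl | hK2
  · obtain ⟨L, hL⟩ := cauchySeq_tendsto_of_complete
      (cauchySeq_sum_div_succ_mul_pow hη (fun h => hηK ⟨rfl, h⟩) hA hdA hw hw0)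
    refine ⟨η * L, (hL.const_mul η).congr fun M => ?_⟩
    rw [mul_sum]
    exact sum_congr rfl fun m _ => by ring
  · exact ⟨_, (summable_pow_div_pow_mul hη hK2 hA hw).hasSum.tendsto_sum_nat⟩

end LastIndex

/-- For `N ≥ 1`, `r ≥ 1`, exponents `kᵢ ≥ 1` and `N`-th roots of unity `εᵢ` with
`(k_r, ε_r) ≠ (1, 1)`, the partial sums of the cyclotomic multiple zeta series converge. -/
theorem cmzv_converges (N r : ℕ) (hN : 1 ≤ N) (hr : 1 ≤ r)
    (k : Fin r → ℕ) (hk : ∀ i, 1 ≤ k i)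
    (ε : Fin r → ℂ) (hε : ∀ i, ε i ^ N = 1)
    (hlast : ¬(k ⟨r - 1, by omega⟩ = 1 ∧ ε ⟨r - 1, by omega⟩ = 1)) :
    ∃ L : ℂ, Tendsto (cmzvPartial r k ε) atTop (𝓝 L) := by
  obtain ⟨s, rfl⟩ : ∃ s, r = s + 1 := ⟨r - 1, by omega⟩
  have hnorm : ∀ i, ‖ε i‖ ≤ 1 := fun i =>
    (Complex.norm_eq_one_of_pow_eq_one (hε i) (by omega)).le
  rw [funext (cmzvPartial_succ s k ε)]
  exact exists_tendsto_sum_pow_div_pow_mul (hnorm _) (hk _) hlast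
    (norm_cmzvPartial_le (fun _ => hk _) (fun _ => hnorm _))
    (norm_cmzvPartial_succ_sub_le (fun _ => hk _) (fun _ => hnorm _))
    (summable_one_add_log_pow_div_succ_sq s) (tendsto_one_add_log_pow_div_succ s)
end

section
/- For every ε ∈ ℂ with |ε| = 1 and ε ≠ 1, the partial sums ∑_{n=1}^{M} ε^n / n converge as M → ∞ to −log(1−ε), where log denotes the principal branch of the complex logarithm. -/
open Filter Topology Finset Complex

/-!
Dirichlet's test (the partial sums of `ε ^ n` are bounded by `2 / ‖1 - ε‖`, and `1 / n`
decreases to `0`) shows that the series converges. By Abel's limit theorem its sum is the radial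
limit of `∑ ε ^ n r ^ n / n = -log (1 - ε r)` as `r → 1⁻`, which is `-log (1 - ε)` because
`1 - ε` lies in the slit plane, where `log` is continuous.
-/

lemma norm_sum_range_pow_succ_le {𝕜 : Type*} [NormedDivisionRing 𝕜] {z : 𝕜} (hz : ‖z‖ ≤ 1)
    (hz1 : z ≠ 1) (n : ℕ) : ‖∑ i ∈ range n, z ^ (i + 1)‖ ≤ 2 / ‖1 - z‖ := by
  have hpos : 0 < ‖1 - z‖ := norm_pos_iff.2 (sub_ne_zero.2 hz1.symm)
  have hpow : ‖z ^ n - 1‖ ≤ 2 := calc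
    ‖z ^ n - 1‖ ≤ ‖z‖ ^ n + 1 := by simpa [norm_pow] using norm_sub_le (z ^ n) 1
    _ ≤ 2 := by linarith [pow_le_one₀ (norm_nonneg z) hz (n := n)]
  calc ‖∑ i ∈ range n, z ^ (i + 1)‖ = ‖z‖ * (‖z ^ n - 1‖ / ‖1 - z‖) := by
        simp_rw [pow_succ', ← mul_sum, geom_sum_eq hz1, norm_mul, norm_div, norm_sub_rev z]
    _ ≤ 1 * (2 / ‖1 - z‖) := by gcongr
    _ = 2 / ‖1 - z‖ := one_mul _

lemma cauchySeq_sum_range_pow_succ_div {𝕜 : Type*} [RCLike 𝕜] {z : 𝕜} (hz : ‖z‖ ≤ 1)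
    (hz1 : z ≠ 1) : CauchySeq fun n ↦ ∑ i ∈ range n, z ^ (i + 1) / (i + 1) := by
  have hanti : Antitone fun i : ℕ ↦ ((i : ℝ) + 1)⁻¹ := fun _ _ hab ↦
    inv_anti₀ (by positivity) (by gcongr)
  have hlim : Tendsto (fun i : ℕ ↦ ((i : ℝ) + 1)⁻¹) atTop (𝓝 0) :=
    tendsto_one_div_add_atTop_nhds_zero_nat.congr fun _ ↦ one_div _
  convert hanti.cauchySeq_series_mul_of_tendsto_zero_of_bounded hlim
    (norm_sum_range_pow_succ_le hz hz1) using 3 with n i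
  rw [RCLike.real_smul_eq_coe_mul, div_eq_inv_mul]
  push_cast
  rfl

lemma exists_tendsto_sum_range_pow_div {𝕜 : Type*} [RCLike 𝕜] {z : 𝕜} (hz : ‖z‖ ≤ 1)
    (hz1 : z ≠ 1) : ∃ l, Tendsto (fun n ↦ ∑ i ∈ range n, z ^ i / i) atTop (𝓝 l) := by
  obtain ⟨l, hl⟩ := cauchySeq_tendsto_of_complete (cauchySeq_sum_range_pow_succ_div hz hz1)
  refine ⟨l, (tendsto_add_atTop_iff_nat 1).1 (hl.congr fun n ↦ ?_)⟩
  simp [sum_range_succ']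

lemma Complex.one_sub_mem_slitPlane {z : ℂ} (hz : ‖z‖ ≤ 1) (hz1 : z ≠ 1) :
    1 - z ∈ slitPlane := by
  rw [mem_slitPlane_iff, sub_re, one_re, sub_im, one_im, zero_sub, neg_ne_zero, sub_pos]
  by_contra! h
  exact hz1 (Complex.ext (le_antisymm (z.re_le_norm.trans hz) h.1) h.2)

lemma tendsto_neg_log_one_sub_mul_nhdsLT {z : ℂ} (hz : 1 - z ∈ slitPlane) :
    Tendsto (fun r : ℝ ↦ -log (1 - z * r)) (𝓝[<] 1) (𝓝 (-log (1 - z))) := by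
  have hcont : ContinuousAt (fun r : ℝ ↦ -log (1 - z * r)) 1 :=
    (ContinuousAt.clog (by fun_prop) (by simpa using hz)).neg
  simpa using hcont.tendsto.mono_left nhdsWithin_le_nhds

lemma tendsto_sum_range_pow_div_nat {z : ℂ} (hz : ‖z‖ ≤ 1) (hz1 : z ≠ 1) :
    Tendsto (fun n ↦ ∑ i ∈ range n, z ^ i / i) atTop (𝓝 (-log (1 - z))) := by
  obtain ⟨l, hl⟩ := exists_tendsto_sum_range_pow_div hz hz1
  have habel := tendsto_map'_iff.1 (tendsto_tsum_powerSeries_nhdsWithin_lt hl)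
  have hradial : ∀ r ∈ Set.Ioo (0 : ℝ) 1,
      ∑' n : ℕ, z ^ n / n * (r : ℂ) ^ n = -log (1 - z * r) := fun r hr ↦ by
    have hzr : ‖z * r‖ < 1 := by
      rw [norm_mul, norm_real, Real.norm_of_nonneg hr.1.le]
      nlinarith [hr.1, hr.2, norm_nonneg z]
    simp_rw [← (hasSum_taylorSeries_neg_log hzr).tsum_eq, mul_pow, mul_div_right_comm]
  have hradial_lim : Tendsto (fun r : ℝ ↦ -log (1 - z * r)) (𝓝[<] 1) (𝓝 l) :=
    habel.congr' (eventually_of_mem (Ioo_mem_nhdsLT zero_lt_one) hradial)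
  rwa [tendsto_nhds_unique hradial_lim
    (tendsto_neg_log_one_sub_mul_nhdsLT (one_sub_mem_slitPlane hz hz1))] at hl

/-- For `ε` on the unit circle with `ε ≠ 1`, the partial sums `∑_{n=1}^M ε^n / n`
converge to `-log(1 - ε)`, with `log` the principal branch of the complex logarithm. -/
theorem tendsto_sum_pow_div_nat (ε : ℂ) (habs : ‖ε‖ = 1) (hne : ε ≠ 1) :
    Tendsto (fun M : ℕ => ∑ n ∈ Finset.Icc 1 M, ε ^ n / (n : ℂ)) atTop
      (𝓝 (-Complex.log (1 - ε))) := by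
  refine ((tendsto_add_atTop_iff_nat 1).2 (tendsto_sum_range_pow_div_nat habs.le hne)).congr
    fun M ↦ ?_
  rw [range_eq_Ico, sum_eq_sum_Ico_succ_bot M.succ_pos]
  simp [Ico_add_one_right_eq_Icc]
end

section
/- (Closed formula for the depth-one Ihara action, used in the proof of Lemma 3.2.) For any η, i₁,…,i_s ∈ μ_N (s ≥ 1), in the free algebra A the Ihara action satisfies e_η ∘ (e_{i₁} e_{i₂} ⋯ e_{i_s}) = ∑_{j=1}^{s} e_{i₁} ⋯ e_{i_{j−1}} (e_{η·i_j} e_{i_j} − e_{i_j} e_{η·i_j}) e_{i_{j+1}} ⋯ e_{i_s} + e_{i₁} e_{i₂} ⋯ e_{i_s} e_η. -/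
/-- An `N`-th root of unity in `ℂ`. -/
def RootOfUnity (N : ℕ) : Type := {z : ℂ // z ^ N = 1}

/-- The product of two `N`-th roots of unity. -/
def RootOfUnity.mul {N : ℕ} (ε α : RootOfUnity N) : RootOfUnity N :=
  ⟨ε.1 * α.1, by rw [mul_pow, ε.2, α.2, mul_one]⟩

/-- The generator alphabet: `none` stands for `e₀` and `some α` for `e_α`, `α ∈ μ_N`. -/
def Alphabet (N : ℕ) : Type := Option (RootOfUnity N)

/-- The free noncommutative `ℚ`-algebra `A` on the generators `e₀, (e_α)_{α ∈ μ_N}`. -/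
def FreeAlg (N : ℕ) : Type := MonoidAlgebra ℚ (FreeMonoid (Alphabet N))

noncomputable instance (N : ℕ) : Ring (FreeAlg N) :=
  inferInstanceAs (Ring (MonoidAlgebra ℚ (FreeMonoid (Alphabet N))))

noncomputable instance (N : ℕ) : Algebra ℚ (FreeAlg N) :=
  inferInstanceAs (Algebra ℚ (MonoidAlgebra ℚ (FreeMonoid (Alphabet N))))

/-- The word `u₁u₂⋯u_n` as an element of `A`. -/
noncomputable def word {N : ℕ} (l : List (Alphabet N)) : FreeAlg N :=
  MonoidAlgebra.of ℚ (FreeMonoid (Alphabet N)) (FreeMonoid.ofList l)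

/-- A single generator as an element of `A`. -/
noncomputable def gen {N : ℕ} (g : Alphabet N) : FreeAlg N := word [g]

/-! For a single letter, `[ε](e_η) = e_{εη}` and `(e_{εη})^* = -e_{εη}`, so the defining recursion
with `n = 0` reads `e_η ∘ (e_ε w) = (e_{ηε} e_ε - e_ε e_{ηε}) w + e_ε (e_η ∘ w)`: the action acts as
a derivation replacing one letter at a time, plus the term `w e_η` coming from `e_η ∘ 1 = e_η`.
Induction on the word gives the formula. -/

theorem RootOfUnity.mul_comm {N : ℕ} (ε α : RootOfUnity N) : ε.mul α = α.mul ε :=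
  Subtype.ext (_root_.mul_comm ε.1 α.1)

section Words

variable {N : ℕ}

theorem word_append (u v : List (Alphabet N)) : word (u ++ v) = word u * word v :=
  map_mul (MonoidAlgebra.of ℚ (FreeMonoid (Alphabet N))) (FreeMonoid.ofList u)
    (FreeMonoid.ofList v)

theorem word_cons (g : Alphabet N) (w : List (Alphabet N)) :
    word (g :: w) = gen g * word w :=
  word_append [g] w

theorem word_map_some_nil : word (([] : List (RootOfUnity N)).map some) = 1 := rfl

theorem word_map_some_cons (ε : RootOfUnity N) (t : List (RootOfUnity N)) :
    word ((ε :: t).map some) = gen (some ε) * word (t.map some) :=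
  word_cons _ _

theorem sum_replace_letter_cons (D : RootOfUnity N → FreeAlg N) (ε : RootOfUnity N)
    (t : List (RootOfUnity N)) :
    ∑ j : Fin (ε :: t).length,
        word (((ε :: t).take j).map some) * D ((ε :: t).get j) *
          word (((ε :: t).drop (j + 1)).map some) =
      D ε * word (t.map some) +
        gen (some ε) * ∑ j : Fin t.length,
          word ((t.take j).map some) * D (t.get j) * word ((t.drop (j + 1)).map some) := by
  simp only [List.length_cons, Fin.sum_univ_succ, Fin.val_zero, Fin.val_succ, List.take_zero,
    List.drop_zero, List.take_succ_cons, List.drop_succ_cons, List.get_eq_getElem,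
    List.getElem_cons_zero, List.getElem_cons_succ]
  simp only [word_map_some_nil, word_map_some_cons, one_mul, Finset.mul_sum, mul_assoc]

end Words

section IharaAction

variable {N : ℕ} (circ : FreeAlg N →ₗ[ℚ] FreeAlg N →ₗ[ℚ] FreeAlg N)
  (bracket : RootOfUnity N → FreeAlg N →ₐ[ℚ] FreeAlg N) (star : FreeAlg N →ₗ[ℚ] FreeAlg N)

theorem star_gen
    (hstar : ∀ l : List (Alphabet N), star (word l) = ((-1 : ℚ) ^ l.length) • word l.reverse)
    (g : Alphabet N) : star (gen g) = -gen g := by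
  simpa [gen] using hstar [g]

theorem circ_one (hcirc0 : ∀ (a : FreeAlg N) (n : ℕ), circ a (gen none ^ n) = gen none ^ n * a)
    (a : FreeAlg N) : circ a 1 = a := by
  simpa using hcirc0 a 0

theorem circ_gen_gen_mul_word
    (hbr : ∀ ε α : RootOfUnity N, bracket ε (gen (some α)) = gen (some (ε.mul α)))
    (hstar : ∀ l : List (Alphabet N), star (word l) = ((-1 : ℚ) ^ l.length) • word l.reverse)
    (hcirc : ∀ (a : FreeAlg N) (n : ℕ) (ε : RootOfUnity N) (w : List (Alphabet N)),
      circ a (gen none ^ n * gen (some ε) * word w) =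
        gen none ^ n *
            (bracket ε a * gen (some ε) + gen (some ε) * star (bracket ε a)) * word w +
          gen none ^ n * gen (some ε) * circ a (word w))
    (η ε : RootOfUnity N) (w : List (Alphabet N)) :
    circ (gen (some η)) (gen (some ε) * word w) =
      (gen (some (η.mul ε)) * gen (some ε) - gen (some ε) * gen (some (η.mul ε))) * word w +
        gen (some ε) * circ (gen (some η)) (word w) := by
  have h := hcirc (gen (some η)) 0 ε w
  rw [pow_zero, one_mul, one_mul, hbr, star_gen star hstar (some _), RootOfUnity.mul_comm ε η] at h
  rw [h, mul_neg, sub_eq_add_neg]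

end IharaAction

theorem ihara_action_depth_one_general (N : ℕ)
    (circ : FreeAlg N →ₗ[ℚ] FreeAlg N →ₗ[ℚ] FreeAlg N)
    (bracket : RootOfUnity N → FreeAlg N →ₐ[ℚ] FreeAlg N)
    (hbr : ∀ ε α : RootOfUnity N, bracket ε (gen (some α)) = gen (some (ε.mul α)))
    (star : FreeAlg N →ₗ[ℚ] FreeAlg N)
    (hstar : ∀ l : List (Alphabet N),
      star (word l) = ((-1 : ℚ) ^ l.length) • word l.reverse)
    (hcirc0 : ∀ (a : FreeAlg N) (n : ℕ),
      circ a (gen none ^ n) = gen none ^ n * a)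
    (hcirc : ∀ (a : FreeAlg N) (n : ℕ) (ε : RootOfUnity N) (w : List (Alphabet N)),
      circ a (gen none ^ n * gen (some ε) * word w) =
        gen none ^ n *
            (bracket ε a * gen (some ε) + gen (some ε) * star (bracket ε a)) * word w +
          gen none ^ n * gen (some ε) * circ a (word w))
    (η : RootOfUnity N) (l : List (RootOfUnity N)) :
    circ (gen (some η)) (word (l.map some)) =
      (∑ j : Fin l.length,
        word ((l.take j).map some) *
          (gen (some (η.mul (l.get j))) * gen (some (l.get j)) -
            gen (some (l.get j)) * gen (some (η.mul (l.get j)))) *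
          word ((l.drop (j + 1)).map some)) +
        word (l.map some) * gen (some η) := by
  induction l with
  | nil => rw [word_map_some_nil, circ_one circ hcirc0]; simp
  | cons ε t ih =>
    rw [word_map_some_cons, circ_gen_gen_mul_word circ bracket star hbr hstar hcirc, ih,
      sum_replace_letter_cons (fun α => gen (some (η.mul α)) * gen (some α) -
        gen (some α) * gen (some (η.mul α)))]
    noncomm_ring

/-- Closed formula for the depth-one Ihara action: for any `ℚ`-bilinear map `∘` on `A`
satisfying the defining recursion of the Ihara action (with respect to the twisting algebra
maps `[ε]` and the antipode-like linear map `∗`), one has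
`e_η ∘ (e_{i₁}⋯e_{i_s}) = ∑_j e_{i₁}⋯e_{i_{j-1}}(e_{ηi_j}e_{i_j} - e_{i_j}e_{ηi_j})e_{i_{j+1}}⋯e_{i_s}
  + e_{i₁}⋯e_{i_s}e_η`. -/
theorem ihara_action_depth_one (N : ℕ) (hN : 1 ≤ N)
    (circ : FreeAlg N →ₗ[ℚ] FreeAlg N →ₗ[ℚ] FreeAlg N)
    (bracket : RootOfUnity N → FreeAlg N →ₐ[ℚ] FreeAlg N)
    (hbr0 : ∀ ε : RootOfUnity N, bracket ε (gen none) = gen none)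
    (hbr : ∀ ε α : RootOfUnity N, bracket ε (gen (some α)) = gen (some (ε.mul α)))
    (star : FreeAlg N →ₗ[ℚ] FreeAlg N)
    (hstar : ∀ l : List (Alphabet N),
      star (word l) = ((-1 : ℚ) ^ l.length) • word l.reverse)
    (hcirc0 : ∀ (a : FreeAlg N) (n : ℕ),
      circ a (gen none ^ n) = gen none ^ n * a)
    (hcirc : ∀ (a : FreeAlg N) (n : ℕ) (ε : RootOfUnity N) (w : List (Alphabet N)),
      circ a (gen none ^ n * gen (some ε) * word w) =
        gen none ^ n *
            (bracket ε a * gen (some ε) + gen (some ε) * star (bracket ε a)) * word w +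
          gen none ^ n * gen (some ε) * circ a (word w))
    (η : RootOfUnity N) (l : List (RootOfUnity N)) (hl : l ≠ []) :
    circ (gen (some η)) (word (l.map some)) =
      (∑ j : Fin l.length,
        word ((l.take j).map some) *
          (gen (some (η.mul (l.get j))) * gen (some (l.get j)) -
            gen (some (l.get j)) * gen (some (η.mul (l.get j)))) *
          word ((l.drop (j + 1)).map some)) +
        word (l.map some) * gen (some η) :=
  ihara_action_depth_one_general N circ bracket hbr star hstar hcirc0 hcirc η l
end
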